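/- arXiv:2504.01516 — 3 statements merged into one kernel-verified Lean document; each statement's English description precedes it below -/
import Mathlib

section
/- For integers k_1,…,k_{N-1}, if k_1 = 0 and for every i with 2 ≤ i ≤ N-2 we have -k_{i-1}/2 + 3k_i/4 - Σ_{j=i+1}^{N-1} k_j/2^j = 0, and additionally -k_{N-2}/2 + 3k_{N-1}/4 = 0, then k_i = 0 for all i = 1,…,N-1. -/
/-!
Equation `i ≥ 2` (the last one being the case `i = N - 1` with an empty tail) is strictly
diagonally dominant: its off-diagonal coefficients have total modulus
`1/2 + ∑_{j>i} 2^{-j} < 1/2 + 2^{-i} ≤ 3/4`. So at an index where `|k i|` is maximal the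
equation forces `k i = 0`, and if that index is `1` then `k 1 = 0` by hypothesis.
-/

open Finset

section
variable {K : Type*} [Field K] [LinearOrder K] [IsStrictOrderedRing K]

theorem geom_sum_Ico_lt_of_lt_one {x : K} (hx : 0 < x) (h'x : x < 1) (m n : ℕ) :
    ∑ i ∈ Ico m n, x ^ i < x ^ m / (1 - x) := by
  rcases le_or_gt m n with hmn | hmn
  · rw [geom_sum_Ico' h'x.ne hmn]
    gcongr
    exact sub_lt_self _ (pow_pos hx n)
  · rw [Ico_eq_empty_of_le hmn.le, sum_empty]
    exact div_pos (pow_pos hx m) (sub_pos.2 h'x)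

theorem abs_sum_Icc_div_two_pow_lt {x : ℕ → K} {M : K} (hM : 0 < M) {a b : ℕ}
    (hx : ∀ j ∈ Icc (a + 1) b, |x j| ≤ M) :
    |∑ j ∈ Icc (a + 1) b, x j / 2 ^ j| < M / 2 ^ a := by
  calc |∑ j ∈ Icc (a + 1) b, x j / 2 ^ j|
      ≤ ∑ j ∈ Icc (a + 1) b, |x j| * (1 / 2) ^ j := by
        simpa [abs_div, div_eq_mul_inv] using abs_sum_le_sum_abs (fun j => x j / 2 ^ j) _
    _ ≤ ∑ j ∈ Icc (a + 1) b, M * (1 / 2) ^ j := by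
        gcongr with j hj
        exact hx j hj
    _ < M * ((1 / 2) ^ (a + 1) / (1 - 1 / 2)) := by
        rw [← mul_sum, ← Ico_add_one_right_eq_Icc]
        gcongr
        exact geom_sum_Ico_lt_of_lt_one (by norm_num) (by norm_num) _ _
    _ = M / 2 ^ a := by
        rw [div_pow, one_pow]
        field_simp
        ring

theorem eq_zero_of_row_of_abs_le {x : ℕ → K} {i n : ℕ} (hi : 2 ≤ i)
    (hrow : 3 * x i / 4 = x (i - 1) / 2 + ∑ j ∈ Icc (i + 1) n, x j / 2 ^ j)
    (hprev : |x (i - 1)| ≤ |x i|) (htail : ∀ j ∈ Icc (i + 1) n, |x j| ≤ |x i|) :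
    x i = 0 := by
  by_contra hxi
  have hM : 0 < |x i| := abs_pos.2 hxi
  have hpow : |x i| / 2 ^ i ≤ |x i| / 4 := by
    gcongr
    calc (4 : K) = 2 ^ 2 := by norm_num
      _ ≤ 2 ^ i := pow_le_pow_right₀ (by norm_num) hi
  have : 3 * |x i| / 4 < |x i| / 2 + |x i| / 2 ^ i := calc
    3 * |x i| / 4 = |x (i - 1) / 2 + ∑ j ∈ Icc (i + 1) n, x j / 2 ^ j| := by
        rw [← hrow, abs_div, abs_mul]
        norm_num
    _ ≤ |x (i - 1)| / 2 + |∑ j ∈ Icc (i + 1) n, x j / 2 ^ j| := by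
        simpa [abs_div] using abs_add_le (x (i - 1) / 2) _
    _ < |x i| / 2 + |x i| / 2 ^ i :=
        add_lt_add_of_le_of_lt (by gcongr) (abs_sum_Icc_div_two_pow_lt hM htail)
  linarith
end

theorem suN_fourier_exponents_vanish_general (N : ℕ) (k : ℕ → ℤ)
    (h1 : k 1 = 0)
    (hmid : ∀ i : ℕ, 2 ≤ i → i ≤ N - 2 →
      -(k (i - 1) : ℚ) / 2 + 3 * (k i : ℚ) / 4
        - ∑ j ∈ Finset.Icc (i + 1) (N - 1), (k j : ℚ) / 2 ^ j = 0)
    (hlast : -(k (N - 2) : ℚ) / 2 + 3 * (k (N - 1) : ℚ) / 4 = 0) :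
    ∀ i : ℕ, 1 ≤ i → i ≤ N - 1 → k i = 0 := by
  intro i hi hiN
  have hrow : ∀ m, 2 ≤ m → m ≤ N - 1 →
      3 * (k m : ℚ) / 4 = k (m - 1) / 2 + ∑ j ∈ Icc (m + 1) (N - 1), (k j : ℚ) / 2 ^ j := by
    intro m hm2 hmN
    rcases Nat.lt_or_ge (N - 2) m with hm | hm
    · obtain rfl : m = N - 1 := by omega
      rw [Icc_eq_empty (by omega), sum_empty, show N - 1 - 1 = N - 2 by omega]
      linarith
    · linarith [hmid m hm2 hm]
  obtain ⟨m, hm, hmax⟩ := exists_max_image (Icc 1 (N - 1)) (fun j => |(k j : ℚ)|)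
    ⟨i, mem_Icc.2 ⟨hi, hiN⟩⟩
  obtain ⟨hm1, hmN⟩ := mem_Icc.1 hm
  have hkm : (k m : ℚ) = 0 := by
    obtain rfl | hm2 : m = 1 ∨ 2 ≤ m := by omega
    · simp [h1]
    exact eq_zero_of_row_of_abs_le (x := fun j => (k j : ℚ)) hm2 (hrow m hm2 hmN)
      (hmax _ (mem_Icc.2 ⟨by omega, by omega⟩)) fun j hj => hmax j (Icc_subset_Icc (by omega) le_rfl hj)
  have hki := hmax i (mem_Icc.2 ⟨hi, hiN⟩)
  rw [hkm, abs_zero, abs_nonpos_iff] at hki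
  exact_mod_cast hki

/-- Integer solutions of the linear system `A·k = 0` arising in the SU(N)
Euler-angle integral computation: if `k₁ = 0`, the middle equations
`-k_{i-1}/2 + 3 k_i/4 - ∑_{j=i+1}^{N-1} k_j/2^j = 0` hold for `2 ≤ i ≤ N-2`,
and `-k_{N-2}/2 + 3 k_{N-1}/4 = 0`, then `k_i = 0` for all `1 ≤ i ≤ N-1`. -/
theorem suN_fourier_exponents_vanish (N : ℕ) (hN : 2 ≤ N) (k : ℕ → ℤ)
    (h1 : k 1 = 0)
    (hmid : ∀ i : ℕ, 2 ≤ i → i ≤ N - 2 →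
      -(k (i - 1) : ℚ) / 2 + 3 * (k i : ℚ) / 4
        - ∑ j ∈ Finset.Icc (i + 1) (N - 1), (k j : ℚ) / 2 ^ j = 0)
    (hlast : -(k (N - 2) : ℚ) / 2 + 3 * (k (N - 1) : ℚ) / 4 = 0) :
    ∀ i : ℕ, 1 ≤ i → i ≤ N - 1 → k i = 0 :=
  suN_fourier_exponents_vanish_general N k h1 hmid hlast
end

section
/- Let N ≥ 3, K = {diag(A,1)·e^{ω λ} : A ∈ SU(N-1), ω ∈ [0,2π)} ⊆ SU(N) where λ = λ_{N²-1} = i·diag(0,…,0,1,-1)-type generator (the (N-1,N) Cartan generator of su(N)), and let a = ℝ·λ_{N²-2} where λ_{N²-2} is the real rotation generator in the (N-1,N)-plane (entries: (N-1,N)-entry 1, (N,N-1)-entry -1, zeros elsewhere). Then the centralizer Z_K(a) = {diag(B, e^{-ix}, e^{-ix}) : B ∈ U(N-2), x ∈ ℝ, det(B)·e^{-2ix} = 1}. -/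
open Complex Matrix NormedSpace

/-- The diagonal generator `λ_{N²-1} = i(E_{N-1,N-1} - E_{N,N})` as an `N×N` matrix. -/
def lamD (N k : ℕ) : Matrix (Fin N) (Fin N) ℂ :=
  Matrix.diagonal fun i =>
    if i.val = k - 2 then Complex.I else if i.val = k - 1 then -Complex.I else 0

/-- The rotation generator `λ_{N²-2} = E_{N-1,N} - E_{N,N-1}` as an `N×N` matrix. -/
def lamR (N k : ℕ) : Matrix (Fin N) (Fin N) ℂ := fun i j =>
  if i.val = k - 2 ∧ j.val = k - 1 then 1
  else if i.val = k - 1 ∧ j.val = k - 2 then -1 else 0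

/-- The `N×N` matrix with upper-left `n×n` block `B` and diagonal entries `d i`
in the remaining positions. -/
def embedBlock (N n : ℕ) (B : Matrix (Fin n) (Fin n) ℂ) (d : ℕ → ℂ) :
    Matrix (Fin N) (Fin N) ℂ := fun i j =>
  if hi : i.val < n then (if hj : j.val < n then B ⟨i.val, hi⟩ ⟨j.val, hj⟩ else 0)
  else if i.val = j.val then d i.val else 0

/-- The subgroup `K = {diag(A,1)·e^{ωλ_{N²-1}} : A ∈ SU(N-1), ω ∈ [0,2π)} ⊆ SU(N)`. -/
noncomputable def Ksub (N : ℕ) : Set (Matrix (Fin N) (Fin N) ℂ) :=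
  {g | ∃ A : Matrix (Fin (N - 1)) (Fin (N - 1)) ℂ, ∃ ω ∈ Set.Ico (0:ℝ) (2 * Real.pi),
    Aᴴ * A = 1 ∧ A.det = 1 ∧
    g = embedBlock N (N - 1) A (fun _ => 1) * NormedSpace.exp ((ω : ℂ) • lamD N N)}

/-!
Write `N = n + 2`. An element of `K` is `g = diag(A, 1) · diag(1, …, 1, e^{iω}, e^{-iω})`, so the
last row and column of `g` are those of `e^{-iω}·1`. Since `λ_{N²-2} = E_{N-1,N} - E_{N,N-1}`,
commuting with it forces row and column `N-1` of `g` to vanish off the diagonal and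
`g_{N-1,N-1} = g_{N,N}`; hence `A = diag(B, e^{-2iω})` and `g = diag(B, e^{-iω}, e^{-iω})`, with
`B` unitary and `det B · e^{-2iω} = det A = 1`. Conversely, such a matrix commutes with
`λ_{N²-2}` and lies in `K` by the same computation with `ω ≡ x mod 2π`. All these matrices are
invertible, so being fixed by conjugation is the same as commuting.
-/

lemma mul_single_one_apply {l m n R : Type*} [Fintype m] [DecidableEq m] [DecidableEq n]
    [NonAssocSemiring R] (M : Matrix l m R) (p : m) (q : n) (i : l) (j : n) :
    (M * single p q (1 : R)) i j = if j = q then M i p else 0 := by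
  split_ifs with h
  · simp [h]
  · exact mul_single_apply_of_ne _ _ _ _ _ h _

lemma single_one_mul_apply {l m n R : Type*} [Fintype m] [DecidableEq l] [DecidableEq m]
    [NonAssocSemiring R] (M : Matrix m n R) (p : l) (q : m) (i : l) (j : n) :
    (single p q (1 : R) * M) i j = if i = p then M q j else 0 := by
  split_ifs with h
  · simp [h]
  · exact single_mul_apply_of_ne _ _ _ _ _ h _

lemma commute_single_sub_single {ι R : Type*} [Fintype ι] [DecidableEq ι] [Ring R] {p q : ι}
    (hpq : p ≠ q) {M : Matrix ι ι R} (h : Commute M (single p q 1 - single q p 1)) :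
    (∀ i, i ≠ p → i ≠ q → M i p = 0) ∧ (∀ j, j ≠ p → j ≠ q → M p j = 0) ∧ M p p = M q q := by
  have entry := fun i j => congrFun (congrFun h.eq i) j
  simp only [Matrix.mul_sub, Matrix.sub_mul, Matrix.sub_apply] at entry
  refine ⟨fun i hip hiq => ?_, fun j hjp hjq => ?_, ?_⟩
  · simpa [hip, hiq, hpq.symm] using entry i q
  · simpa [hjp, hjq, hpq.symm] using entry q j
  · simpa [hpq, hpq.symm] using entry p q

lemma forall_conj_smul_eq_iff_commute {ι : Type*} [Fintype ι] [DecidableEq ι]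
    {g : Matrix ι ι ℂ} (hg : IsUnit g.det) (L : Matrix ι ι ℂ) :
    (∀ c : ℝ, g * ((c : ℂ) • L) * g⁻¹ = (c : ℂ) • L) ↔ Commute g L := by
  have := g.invertibleOfIsUnitDet hg
  rw [Commute, SemiconjBy, ← mul_inv_eq_iff_eq_mul_of_invertible]
  refine ⟨fun h => by simpa using h 1, fun h c => ?_⟩
  rw [mul_smul_comm, smul_mul_assoc, h]

lemma star_exp_mul_exp_of_re_eq_zero {z : ℂ} (hz : z.re = 0) :
    star (Complex.exp z) * Complex.exp z = 1 := by
  simp [Complex.conj_mul', Complex.norm_exp, hz]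

lemma exp_neg_two_I_mul (z : ℂ) : Complex.exp (-(2 * I * z)) = Complex.exp (-(I * z)) ^ 2 := by
  rw [← Complex.exp_nat_mul]
  ring_nf

lemma exp_neg_two_I_mul_mul_exp_I_mul (z : ℂ) :
    Complex.exp (-(2 * I * z)) * Complex.exp (I * z) = Complex.exp (-(I * z)) := by
  rw [← Complex.exp_add]
  ring_nf

lemma exists_mem_Ico_exp_neg_I_mul_eq (x : ℝ) :
    ∃ ω ∈ Set.Ico 0 (2 * Real.pi), Complex.exp (-(I * ω)) = Complex.exp (-(I * x)) := by
  refine ⟨toIcoMod Real.two_pi_pos 0 x, by simpa using toIcoMod_mem_Ico Real.two_pi_pos 0 x, ?_⟩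
  rw [← self_sub_toIcoDiv_zsmul, zsmul_eq_mul]
  push_cast
  rw [show -(I * (x - toIcoDiv Real.two_pi_pos 0 x * (2 * Real.pi))) =
      -(I * x) + toIcoDiv Real.two_pi_pos 0 x * (2 * Real.pi * I) by ring,
    Complex.exp_add, Complex.exp_int_mul_two_pi_mul_I, mul_one]

lemma embedBlock_eq_submatrix_fromBlocks (n m : ℕ) (B : Matrix (Fin n) (Fin n) ℂ) (d : ℕ → ℂ) :
    embedBlock (n + m) n B d =
      (fromBlocks B 0 0 (diagonal fun j : Fin m => d (n + j))).submatrix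
        finSumFinEquiv.symm finSumFinEquiv.symm := by
  ext i j
  induction i using Fin.addCases <;> induction j using Fin.addCases <;>
    simp [embedBlock, diagonal_apply, Fin.ext_iff]
  omega

lemma det_embedBlock (n m : ℕ) (B : Matrix (Fin n) (Fin n) ℂ) (d : ℕ → ℂ) :
    (embedBlock (n + m) n B d).det = B.det * ∏ j : Fin m, d (n + j) := by
  rw [embedBlock_eq_submatrix_fromBlocks, det_submatrix_equiv_self, det_fromBlocks_zero₂₁,
    det_diagonal]

lemma conjTranspose_embedBlock_mul_self_eq_one_iff (n m : ℕ) (B : Matrix (Fin n) (Fin n) ℂ)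
    (d : ℕ → ℂ) :
    (embedBlock (n + m) n B d)ᴴ * embedBlock (n + m) n B d = 1 ↔
      Bᴴ * B = 1 ∧ ∀ j : Fin m, star (d (n + j)) * d (n + j) = 1 := by
  rw [embedBlock_eq_submatrix_fromBlocks, conjTranspose_submatrix, submatrix_mul_equiv,
    fromBlocks_conjTranspose, fromBlocks_multiply, ← submatrix_one_equiv finSumFinEquiv.symm,
    ← reindex_apply, ← reindex_apply, (reindex _ _).injective.eq_iff, ← fromBlocks_one,
    fromBlocks_inj]
  simp [diagonal_eq_one, funext_iff]

@[simp]
lemma embedBlock_castSucc_castSucc {n : ℕ} (B : Matrix (Fin n) (Fin n) ℂ) (d : ℕ → ℂ)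
    (i j : Fin n) : embedBlock (n + 1) n B d i.castSucc j.castSucc = B i j := by
  simp [embedBlock]

@[simp]
lemma embedBlock_castSucc_last {n : ℕ} (B : Matrix (Fin n) (Fin n) ℂ) (d : ℕ → ℂ) (i : Fin n) :
    embedBlock (n + 1) n B d i.castSucc (Fin.last n) = 0 := by
  simp [embedBlock]

@[simp]
lemma embedBlock_last_castSucc {n : ℕ} (B : Matrix (Fin n) (Fin n) ℂ) (d : ℕ → ℂ) (j : Fin n) :
    embedBlock (n + 1) n B d (Fin.last n) j.castSucc = 0 := by
  simp [embedBlock, j.is_lt.ne']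

@[simp]
lemma embedBlock_last_last {n : ℕ} (B : Matrix (Fin n) (Fin n) ℂ) (d : ℕ → ℂ) :
    embedBlock (n + 1) n B d (Fin.last n) (Fin.last n) = d n := by
  simp [embedBlock]

lemma exp_smul_lamD (N : ℕ) (ω : ℝ) :
    exp ((ω : ℂ) • lamD N N) =
      diagonal fun i : Fin N =>
        if i.val = N - 2 then Complex.exp (I * ω)
        else if i.val = N - 1 then Complex.exp (-(I * ω)) else 1 := by
  rw [lamD, ← diagonal_smul, exp_diagonal, Pi.exp_def]
  congr 1
  ext i
  simp only [Pi.smul_apply, smul_eq_mul]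
  split_ifs <;> simp [← Complex.exp_eq_exp_ℂ, mul_comm]

lemma lamR_eq_single_sub_single (n : ℕ) :
    lamR (n + 2) (n + 2) = single (Fin.last n).castSucc (Fin.last (n + 1)) 1
      - single (Fin.last (n + 1)) (Fin.last n).castSucc 1 := by
  ext i j
  simp only [lamR, Matrix.sub_apply, single_apply, Fin.ext_iff, Fin.val_castSucc, Fin.val_last]
  split_ifs <;> simp <;> omega

lemma embedBlock_embedBlock_mul_exp_smul_lamD (n : ℕ) (B : Matrix (Fin n) (Fin n) ℂ) (ω : ℝ) :
    embedBlock (n + 2) (n + 1) (embedBlock (n + 1) n B fun _ => Complex.exp (-(2 * I * ω)))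
        (fun _ => 1) * exp ((ω : ℂ) • lamD (n + 2) (n + 2)) =
      embedBlock (n + 2) n B fun _ => Complex.exp (-(I * ω)) := by
  ext i j
  rw [exp_smul_lamD, mul_diagonal]
  simp only [embedBlock]
  split_ifs <;> first | omega | simp [exp_neg_two_I_mul_mul_exp_I_mul]

lemma embedBlock_commute_lamR (n : ℕ) (B : Matrix (Fin n) (Fin n) ℂ) (c : ℂ) :
    Commute (embedBlock (n + 2) n B fun _ => c) (lamR (n + 2) (n + 2)) := by
  ext i j
  simp only [lamR_eq_single_sub_single, Matrix.mul_sub, Matrix.sub_mul, Matrix.sub_apply,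
    mul_single_one_apply, single_one_mul_apply, embedBlock, Fin.ext_iff, Fin.val_castSucc,
    Fin.val_last]
  split_ifs <;> first | omega | simp

lemma exists_eq_embedBlock_of_commute_lamR {n : ℕ} {A : Matrix (Fin (n + 1)) (Fin (n + 1)) ℂ}
    {ω : ℝ} (h : Commute (embedBlock (n + 2) (n + 1) A (fun _ => 1) *
      exp ((ω : ℂ) • lamD (n + 2) (n + 2))) (lamR (n + 2) (n + 2))) :
    ∃ B, A = embedBlock (n + 1) n B fun _ => Complex.exp (-(2 * I * ω)) := by
  refine ⟨A.submatrix Fin.castSucc Fin.castSucc, ?_⟩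
  rw [lamR_eq_single_sub_single] at h
  obtain ⟨hcol, hrow, hdiag⟩ := commute_single_sub_single (Fin.castSucc_lt_last _).ne h
  simp only [exp_smul_lamD, mul_diagonal] at hcol hrow hdiag
  ext i j
  induction i using Fin.lastCases with
  | last =>
    induction j using Fin.lastCases with
    | last =>
      rw [embedBlock_last_last, ← mul_left_inj' (Complex.exp_ne_zero (I * ω)),
        exp_neg_two_I_mul_mul_exp_I_mul]
      simpa using hdiag
    | cast j =>
      have := hrow j.castSucc.castSucc (by simp) (Fin.castSucc_lt_last _).ne
      simpa [j.is_lt.ne, show (j : ℕ) ≠ n + 1 by omega] using this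
  | cast i =>
    induction j using Fin.lastCases with
    | last =>
      have := hcol i.castSucc.castSucc (by simp) (Fin.castSucc_lt_last _).ne
      simpa using this
    | cast j => simp

lemma isUnit_det_of_mem_Ksub {n : ℕ} {g : Matrix (Fin (n + 1)) (Fin (n + 1)) ℂ}
    (hg : g ∈ Ksub (n + 1)) : IsUnit g.det := by
  obtain ⟨A, ω, -, -, hA, rfl⟩ := hg
  rw [← isUnit_iff_isUnit_det]
  refine IsUnit.mul ((isUnit_iff_isUnit_det _).2 ?_) (isUnit_exp _)
  change IsUnit (embedBlock (n + 1) n A fun _ => 1).det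
  simp [det_embedBlock n 1, hA]

/-- The centralizer `Z_K(a)` of `a = ℝ·λ_{N²-2}` in `K` is
`{diag(B, e^{-ix}, e^{-ix}) : B ∈ U(N-2), det(B)·e^{-2ix} = 1}`. -/
theorem centralizer_Ksub (N : ℕ) (hN : 3 ≤ N) :
    {g ∈ Ksub N | ∀ c : ℝ, g * ((c : ℂ) • lamR N N) * g⁻¹ = (c : ℂ) • lamR N N}
      = {g | ∃ B : Matrix (Fin (N - 2)) (Fin (N - 2)) ℂ, ∃ x : ℝ,
          Bᴴ * B = 1 ∧ B.det * Complex.exp (-(2 * I * x)) = 1 ∧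
          g = embedBlock N (N - 2) B (fun _ => Complex.exp (-(I * x)))} := by
  obtain ⟨n, rfl⟩ : ∃ n, N = n + 2 := ⟨N - 2, by omega⟩
  ext g
  constructor
  · rintro ⟨hK, hc⟩
    rw [forall_conj_smul_eq_iff_commute (isUnit_det_of_mem_Ksub hK)] at hc
    obtain ⟨A, ω, -, hA, hdet, rfl⟩ := hK
    obtain ⟨B, rfl⟩ := exists_eq_embedBlock_of_commute_lamR hc
    rw [conjTranspose_embedBlock_mul_self_eq_one_iff n 1] at hA
    rw [det_embedBlock n 1] at hdet
    exact ⟨B, ω, hA.1, by simpa using hdet, embedBlock_embedBlock_mul_exp_smul_lamD n B ω⟩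
  · rintro ⟨B, x, hB, hdet, rfl⟩
    obtain ⟨ω, hω, hωx⟩ := exists_mem_Ico_exp_neg_I_mul_eq x
    have hK : (embedBlock (n + 2) n B fun _ => Complex.exp (-(I * x))) ∈ Ksub (n + 2) := by
      refine ⟨embedBlock (n + 1) n B fun _ => Complex.exp (-(2 * I * ω)), ω, hω, ?_, ?_, ?_⟩
      · exact (conjTranspose_embedBlock_mul_self_eq_one_iff n 1 _ _).2
          ⟨hB, fun _ => star_exp_mul_exp_of_re_eq_zero (by simp)⟩
      · rw [det_embedBlock n 1, exp_neg_two_I_mul, hωx, ← exp_neg_two_I_mul]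
        simpa using hdet
      · rw [← hωx]
        exact (embedBlock_embedBlock_mul_exp_smul_lamD n B ω).symm
    exact ⟨hK, (forall_conj_smul_eq_iff_commute (isUnit_det_of_mem_Ksub hK) _).2
      (embedBlock_commute_lamR n B _)⟩
end

section
/- For any t ∈ ℝ and ψ₁, ψ₂, φ₂ ∈ ℝ, the following identity holds in SU(3): e^{tλ₈} e^{ψ₁λ₂} e^{φ₂λ₈} e^{ψ₂λ₇} = e^{-(t/2)λ₃} e^{ψ₁λ₂} e^{(φ₂ + 3t/4)λ₈} e^{ψ₂λ₇} e^{(t/4)λ₈} e^{(t/2)λ₃}, where λ₂, λ₃, λ₇, λ₈ are the named real basis elements of su(3): λ₂ = E₁₂ - E₂₁, λ₃ = i(E₁₁ - E₂₂), λ₇ = E₂₃ - E₃₂, λ₈ = i(E₂₂ - E₃₃). -/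
/-!
Write `tλ₈ = -(t/2)λ₃ + D` with `D = diag(it/2, it/2, -it)`. Everything diagonal commutes, and `D`
is scalar on the block of `λ₂`, so `e^D` passes through `e^{ψ₁λ₂}`. Absorbing `φ₂λ₈` leaves
`D + φ₂λ₈ = (φ₂ + 3t/4)λ₈ + D'` with `D' = diag(it/2, -it/4, -it/4)`, which is scalar on the block
of `λ₇`, so `e^{D'}` passes through `e^{ψ₂λ₇}`; finally `D' = (t/4)λ₈ + (t/2)λ₃`.
-/

open Complex Matrix NormedSpace

namespace Matrix

variable {n α : Type*} [Fintype n] [DecidableEq n]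

theorem commute_diagonal_of_apply_ne_zero [NonUnitalNonAssocCommSemiring α] {d : n → α}
    {A : Matrix n n α} (h : ∀ i j, A i j ≠ 0 → d i = d j) : Commute (diagonal d) A := by
  ext i j
  rw [diagonal_mul, mul_diagonal]
  by_cases hA : A i j = 0
  · simp [hA]
  · rw [h i j hA, mul_comm]

theorem exp_diagonal_mul_exp_diagonal [NormedCommRing α] [NormedAlgebra ℚ α] [CompleteSpace α]
    (d e : n → α) : exp (diagonal d) * exp (diagonal e) = exp (diagonal (d + e)) := by
  rw [← exp_add_of_commute _ _ (commute_diagonal d e), diagonal_add]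
  rfl

end Matrix

/-- The 'pulling exponentials through' identity in `SU(3)`:
`e^{tL8} e^{ψ₁L2} e^{φ₂L8} e^{ψ₂L7}
 = e^{-(t/2)L3} e^{ψ₁L2} e^{(φ₂+3t/4)L8} e^{ψ₂L7} e^{(t/4)L8} e^{(t/2)L3}`. -/
theorem su3_pulling_exponentials (t ψ₁ ψ₂ φ₂ : ℝ) :
    let L2 : Matrix (Fin 3) (Fin 3) ℂ := !![0, 1, 0; -1, 0, 0; 0, 0, 0]
    let L3 : Matrix (Fin 3) (Fin 3) ℂ := !![I, 0, 0; 0, -I, 0; 0, 0, 0]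
    let L7 : Matrix (Fin 3) (Fin 3) ℂ := !![0, 0, 0; 0, 0, 1; 0, -1, 0]
    let L8 : Matrix (Fin 3) (Fin 3) ℂ := !![0, 0, 0; 0, I, 0; 0, 0, -I]
    exp ((t : ℂ) • L8) * exp ((ψ₁ : ℂ) • L2) * exp ((φ₂ : ℂ) • L8)
        * exp ((ψ₂ : ℂ) • L7)
      = exp ((-(t / 2) : ℂ) • L3) * exp ((ψ₁ : ℂ) • L2)
          * exp (((φ₂ + 3 * t / 4 : ℝ) : ℂ) • L8) * exp ((ψ₂ : ℂ) • L7)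
          * exp (((t / 4 : ℝ) : ℂ) • L8) * exp (((t / 2 : ℝ) : ℂ) • L3) := by
  intro L2 L3 L7 L8
  have hL3 : L3 = diagonal ![I, -I, 0] := by ext i j; fin_cases i <;> fin_cases j <;> rfl
  have hL8 : L8 = diagonal ![0, I, -I] := by ext i j; fin_cases i <;> fin_cases j <;> rfl
  set D : Fin 3 → ℂ := ![I * (t / 2), I * (t / 2), -(I * t)]
  set D' : Fin 3 → ℂ := ![I * (t / 2), -(I * (t / 4)), -(I * (t / 4))]
  have split_t : exp ((t : ℂ) • L8) = exp ((-(t / 2) : ℂ) • L3) * exp (diagonal D) := by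
    rw [hL3, hL8, ← diagonal_smul, ← diagonal_smul, exp_diagonal_mul_exp_diagonal]
    congr 2; ext i; fin_cases i <;> simp [D] <;> ring
  have pull_ψ₁ : Commute (exp (diagonal D)) (exp ((ψ₁ : ℂ) • L2)) := by
    refine Commute.exp (commute_diagonal_of_apply_ne_zero fun i j hij => ?_)
    fin_cases i <;> fin_cases j <;> simp [D, L2] at hij ⊢
  have pull_φ₂ : exp (diagonal D) * exp ((φ₂ : ℂ) • L8)
      = exp (((φ₂ + 3 * t / 4 : ℝ) : ℂ) • L8) * exp (diagonal D') := by
    rw [hL8, ← diagonal_smul, ← diagonal_smul, exp_diagonal_mul_exp_diagonal,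
      exp_diagonal_mul_exp_diagonal]
    congr 2; ext i; fin_cases i <;> simp [D, D'] <;> ring
  have pull_ψ₂ : Commute (exp (diagonal D')) (exp ((ψ₂ : ℂ) • L7)) := by
    refine Commute.exp (commute_diagonal_of_apply_ne_zero fun i j hij => ?_)
    fin_cases i <;> fin_cases j <;> simp [D', L7] at hij ⊢
  have split_D' :
      exp (diagonal D') = exp (((t / 4 : ℝ) : ℂ) • L8) * exp (((t / 2 : ℝ) : ℂ) • L3) := by
    rw [hL3, hL8, ← diagonal_smul, ← diagonal_smul, exp_diagonal_mul_exp_diagonal]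
    congr 2; ext i; fin_cases i <;> simp [D'] <;> ring
  rw [split_t, mul_assoc _ (exp (diagonal D)), pull_ψ₁.eq, ← mul_assoc,
    mul_assoc _ (exp (diagonal D)), pull_φ₂, ← mul_assoc, mul_assoc _ (exp (diagonal D')),
    pull_ψ₂.eq, split_D']
  simp only [mul_assoc]
end
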